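/- Let G be a finite abelian group of size 2^{2n} (n >= 2) and C_0 ⊆ G with |G \ C_0| <= 2^{2n}/n. There is an absolute constant k such that for t >= k log n, if C_{i+1} = C_i ∪ (C_i + u_{i+1}) with u_1, ..., u_t independent uniform in G, then P(C_t ≠ G) <= 1/n^2. -/

import Mathlib

/-!
Track the uncovered sets `U_i = G \ C_i`: a step replaces `U` by `U ∩ (v + U)`, and over `v`
these sets have average size `|U|² / |G|`. Call the step good if `|G| |U ∩ (v + U)| ≤ c |U|²`;
by Markov at most `|G| / c` of the `v` are bad. A good step squares the normalized size
`c |U| / |G|`, which starts at most `1 / √n` for `c = √n`, so `log₂ n + 3` good steps empty `U`.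
Weighting each good step by `1/4`, the sum of `(1/4)^(#good steps)` over all `t`-tuples is at most
`((1/4 + 1/c) |G|)^t`, so fewer than `s` good steps occur for at most `4^s (1/4 + 1/c)^t |G|^t`
tuples, which is below `|G|^t / n²` once `t ≥ 240 log n`.
-/

open Classical

/-- The covered sets of the iterated random-translate process:
`C_{i+1} = C_i ∪ (C_i + u_{i+1})`. -/
def iterCover {G : Type*} [AddCommGroup G] [DecidableEq G]
    (C₀ : Finset G) (u : ℕ → G) : ℕ → Finset G
  | 0 => C₀
  | i + 1 => iterCover C₀ u i ∪ (iterCover C₀ u i).image (fun c => c + u (i + 1))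

open Finset
open scoped Pointwise

section
variable {G : Type*} [AddCommGroup G] [DecidableEq G]

lemma compl_union_image_add [Fintype G] (C : Finset G) (v : G) :
    univ \ (C ∪ C.image (· + v)) = (univ \ C) ∩ (v +ᵥ (univ \ C)) := by
  ext g
  simp [← neg_vadd_mem_iff, add_comm]

lemma sum_card_inter_vadd [Fintype G] (U : Finset G) : ∑ v : G, #(U ∩ (v +ᵥ U)) = #U ^ 2 := by
  simp only [card_inter_vadd, ← card_add_eq]
  rw [sq]
  nth_rw 2 [← card_neg U]
  rw [← card_product]
  exact (card_eq_sum_card_fiberwise fun _ _ => mem_univ _).symm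

def uncovered (U : Finset G) : ∀ {t : ℕ}, (Fin t → G) → Finset G
  | 0, _ => U
  | _ + 1, u => uncovered U (Fin.init u) ∩ (u (Fin.last _) +ᵥ uncovered U (Fin.init u))

lemma uncovered_snoc (U : Finset G) {t : ℕ} (w : Fin t → G) (v : G) :
    uncovered U (Fin.snoc w v : Fin (t + 1) → G) = uncovered U w ∩ (v +ᵥ uncovered U w) := by
  simp [uncovered]

lemma compl_iterCover [Fintype G] (C : Finset G) (w : ℕ → G) (t : ℕ) :
    univ \ iterCover C w t = uncovered (univ \ C) (fun i : Fin t => w (i + 1)) := by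
  induction t with
  | zero => rfl
  | succ t ih => rw [iterCover, compl_union_image_add, ih]; rfl

variable [Fintype G]

def IsGoodStep (c : ℝ) (U : Finset G) (v : G) : Prop :=
  Fintype.card G * (#(U ∩ (v +ᵥ U)) : ℝ) ≤ c * #U ^ 2

lemma card_not_isGoodStep_le {c : ℝ} (hc : 0 < c) (U : Finset G) :
    (#{v | ¬ IsGoodStep c U v} : ℝ) ≤ Fintype.card G / c := by
  rcases U.eq_empty_or_nonempty with rfl | hU
  · simpa [IsGoodStep] using div_nonneg (Nat.cast_nonneg (Fintype.card G)) hc.le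
  have hU2 : (0 : ℝ) < #U ^ 2 := by positivity
  rw [le_div_iff₀ hc, ← mul_le_mul_iff_of_pos_right hU2]
  calc (#{v | ¬ IsGoodStep c U v} : ℝ) * c * #U ^ 2
      = ∑ v ∈ {v | ¬ IsGoodStep c U v}, c * (#U : ℝ) ^ 2 := by
        rw [sum_const, nsmul_eq_mul, mul_assoc]
    _ ≤ ∑ v ∈ {v | ¬ IsGoodStep c U v}, (Fintype.card G * #(U ∩ (v +ᵥ U)) : ℝ) :=
        sum_le_sum fun v hv => (not_le.mp (mem_filter.mp hv).2).le
    _ ≤ ∑ v, (Fintype.card G * #(U ∩ (v +ᵥ U)) : ℝ) :=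
        sum_le_sum_of_subset_of_nonneg (subset_univ _) fun _ _ _ => by positivity
    _ = Fintype.card G * #U ^ 2 := by
        rw [← mul_sum]
        exact_mod_cast congrArg (Fintype.card G * ·) (sum_card_inter_vadd U)

lemma sum_ite_isGoodStep_le {c a : ℝ} (hc : 0 < c) (ha₀ : 0 ≤ a) (ha₁ : a ≤ 1) (U : Finset G) :
    ∑ v, (if IsGoodStep c U v then a else 1) ≤ (a + 1 / c) * Fintype.card G := by
  rw [sum_ite, sum_const, sum_const, nsmul_eq_mul, nsmul_one]
  have hsplit : (#{v | IsGoodStep c U v} + #{v | ¬ IsGoodStep c U v} : ℝ) = Fintype.card G := by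
    exact_mod_cast card_filter_add_card_filter_not _
  have hbad := mul_le_mul_of_nonneg_left (card_not_isGoodStep_le hc U) (sub_nonneg.mpr ha₁)
  have hGc : 0 ≤ a * (Fintype.card G / c) := by positivity
  linear_combination a * hsplit + hbad + hGc

noncomputable def goodSteps (c : ℝ) (U : Finset G) : ∀ {t : ℕ}, (Fin t → G) → ℕ
  | 0, _ => 0
  | _ + 1, u => goodSteps c U (Fin.init u) +
      if IsGoodStep c (uncovered U (Fin.init u)) (u (Fin.last _)) then 1 else 0

lemma goodSteps_snoc (c : ℝ) (U : Finset G) {t : ℕ} (w : Fin t → G) (v : G) :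
    goodSteps c U (Fin.snoc w v : Fin (t + 1) → G) =
      goodSteps c U w + if IsGoodStep c (uncovered U w) v then 1 else 0 := by
  simp [goodSteps]

lemma sum_pow_goodSteps_le {c a : ℝ} (hc : 0 < c) (ha₀ : 0 ≤ a) (ha₁ : a ≤ 1) (U : Finset G) :
    ∀ t : ℕ, ∑ u : Fin t → G, a ^ goodSteps c U u ≤ ((a + 1 / c) * Fintype.card G) ^ t
  | 0 => by simp [goodSteps]
  | t + 1 => by
    rw [← (Fin.snocEquiv fun _ => G).sum_comp, Fintype.sum_prod_type_right, pow_succ]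
    calc ∑ w : Fin t → G, ∑ v : G, a ^ goodSteps c U (Fin.snoc w v : Fin (t + 1) → G)
        = ∑ w : Fin t → G, a ^ goodSteps c U w *
            ∑ v, (if IsGoodStep c (uncovered U w) v then a else 1) := by
          refine sum_congr rfl fun w _ => ?_
          rw [mul_sum]
          refine sum_congr rfl fun v _ => ?_
          rw [goodSteps_snoc, pow_add]
          split_ifs <;> simp
      _ ≤ ∑ w : Fin t → G, a ^ goodSteps c U w * ((a + 1 / c) * Fintype.card G) := by
          gcongr with w
          exact sum_ite_isGoodStep_le hc ha₀ ha₁ _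
      _ ≤ ((a + 1 / c) * Fintype.card G) ^ t * ((a + 1 / c) * Fintype.card G) := by
          rw [← sum_mul]
          gcongr
          exact sum_pow_goodSteps_le hc ha₀ ha₁ U t

lemma card_goodSteps_lt_le {c a : ℝ} (hc : 0 < c) (ha₀ : 0 < a) (ha₁ : a ≤ 1) (U : Finset G)
    (s t : ℕ) :
    (#{u : Fin t → G | goodSteps c U u < s} : ℝ) ≤ ((a + 1 / c) * Fintype.card G) ^ t / a ^ s := by
  rw [le_div_iff₀ (by positivity)]
  calc (#{u : Fin t → G | goodSteps c U u < s} : ℝ) * a ^ s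
      = ∑ u ∈ {u : Fin t → G | goodSteps c U u < s}, a ^ s := by
        rw [sum_const, nsmul_eq_mul]
    _ ≤ ∑ u ∈ {u : Fin t → G | goodSteps c U u < s}, a ^ goodSteps c U u :=
        sum_le_sum fun u hu => pow_le_pow_of_le_one ha₀.le ha₁ (mem_filter.mp hu).2.le
    _ ≤ ∑ u : Fin t → G, a ^ goodSteps c U u :=
        sum_le_sum_of_subset_of_nonneg (subset_univ _) fun _ _ _ => by positivity
    _ ≤ _ := sum_pow_goodSteps_le hc ha₀.le ha₁ U t

lemma IsGoodStep.mul_card_le_sq {c y : ℝ} {U : Finset G} {v : G} (h : IsGoodStep c U v)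
    (hc : 0 ≤ c) (hU : c * #U ≤ Fintype.card G * y) :
    c * #(U ∩ (v +ᵥ U)) ≤ Fintype.card G * y ^ 2 := by
  have hG : (0 : ℝ) < Fintype.card G := by exact_mod_cast Fintype.card_pos
  refine le_of_mul_le_mul_left ?_ hG
  calc (Fintype.card G : ℝ) * (c * #(U ∩ (v +ᵥ U))) = c * (Fintype.card G * #(U ∩ (v +ᵥ U))) := by
        ring
    _ ≤ c * (c * #U ^ 2) := mul_le_mul_of_nonneg_left h hc
    _ = (c * #U) ^ 2 := by ring
    _ ≤ (Fintype.card G * y) ^ 2 := pow_le_pow_left₀ (by positivity) hU 2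
    _ = Fintype.card G * (Fintype.card G * y ^ 2) := by ring

lemma mul_card_uncovered_le {c x : ℝ} (hc : 0 ≤ c) {U : Finset G}
    (hU : c * #U ≤ Fintype.card G * x) :
    ∀ {t : ℕ} (u : Fin t → G), c * #(uncovered U u) ≤ Fintype.card G * x ^ 2 ^ goodSteps c U u
  | 0, _ => by simpa [uncovered, goodSteps] using hU
  | t + 1, u => by
    obtain ⟨w, v, rfl⟩ : ∃ w v, u = Fin.snoc w v :=
      ⟨Fin.init u, u (Fin.last t), (Fin.snoc_init_self u).symm⟩
    have ih := mul_card_uncovered_le hc hU w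
    rw [uncovered_snoc, goodSteps_snoc]
    split_ifs with hgood
    · rw [pow_succ, pow_mul]
      exact hgood.mul_card_le_sq hc ih
    · rw [add_zero]
      refine le_trans ?_ ih
      gcongr
      exact inter_subset_left

lemma uncovered_eq_empty_of_le_goodSteps {c x : ℝ} (hc : 0 < c) (hx₀ : 0 ≤ x) (hx₁ : x ≤ 1)
    {U : Finset G} (hU : c * #U ≤ Fintype.card G * x) {s : ℕ}
    (hs : Fintype.card G * x ^ 2 ^ s < c) {t : ℕ} (u : Fin t → G) (hu : s ≤ goodSteps c U u) :
    uncovered U u = ∅ := by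
  have hxs : x ^ 2 ^ goodSteps c U u ≤ x ^ 2 ^ s :=
    pow_le_pow_of_le_one hx₀ hx₁ (Nat.pow_le_pow_right two_pos hu)
  have hlt : c * #(uncovered U u) < c * 1 := by
    calc c * #(uncovered U u) ≤ Fintype.card G * x ^ 2 ^ goodSteps c U u :=
          mul_card_uncovered_le hc.le hU u
      _ ≤ Fintype.card G * x ^ 2 ^ s := by gcongr
      _ < c * 1 := by rwa [mul_one]
  have : #(uncovered U u) < 1 := by exact_mod_cast lt_of_mul_lt_mul_left hlt hc.le
  exact card_eq_zero.mp (Nat.lt_one_iff.mp this)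

theorem card_iterCover_ne_univ_le {c x a : ℝ} (hc : 0 < c) (hx₀ : 0 ≤ x) (hx₁ : x ≤ 1)
    (ha₀ : 0 < a) (ha₁ : a ≤ 1) {C₀ : Finset G} (hC₀ : c * #(univ \ C₀) ≤ Fintype.card G * x)
    {s : ℕ} (hs : Fintype.card G * x ^ 2 ^ s < c) (t : ℕ) :
    (#{u : Fin t → G | iterCover C₀ (fun i => if h : i - 1 < t then u ⟨i - 1, h⟩ else 0) t ≠
        univ} : ℝ) ≤ ((a + 1 / c) * Fintype.card G) ^ t / a ^ s := by
  refine le_trans ?_ (card_goodSteps_lt_le hc ha₀ ha₁ (univ \ C₀) s t)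
  gcongr with u
  intro hne
  by_contra! hu
  apply hne
  have hcompl := compl_iterCover C₀ (fun i => if h : i - 1 < t then u ⟨i - 1, h⟩ else 0) t
  simp only [Nat.add_sub_cancel, Fin.is_lt, dif_pos, Fin.eta] at hcompl
  rw [uncovered_eq_empty_of_le_goodSteps hc hx₀ hx₁ hC₀ hs u hu, sdiff_eq_empty_iff_subset] at hcompl
  exact univ_subset_iff.mp hcompl

end

open Real

lemma four_pow_log_add_three_le {n : ℕ} (hn : n ≠ 0) : (4 : ℝ) ^ (Nat.log 2 n + 3) ≤ 64 * n ^ 2 := by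
  have h : ((2 ^ Nat.log 2 n : ℕ) : ℝ) ≤ n := by exact_mod_cast Nat.pow_log_le_self 2 hn
  push_cast at h
  calc (4 : ℝ) ^ (Nat.log 2 n + 3) = 64 * (2 ^ Nat.log 2 n) ^ 2 := by
        rw [pow_add, ← pow_mul, mul_comm (Nat.log 2 n), pow_mul]; norm_num; ring
    _ ≤ 64 * n ^ 2 := by gcongr

lemma pow_two_pow_log_add_three_lt {n : ℕ} (hn : 2 ≤ n) :
    (2 : ℝ) ^ (2 * n) * (1 / √n) ^ 2 ^ (Nat.log 2 n + 3) < √n := by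
  have hn' : (2 : ℝ) ≤ n := by exact_mod_cast hn
  have hlog : 2 * n ≤ 2 ^ (Nat.log 2 n + 2) := by
    have := Nat.lt_pow_succ_log_self one_lt_two n
    rw [pow_succ] at this ⊢
    omega
  have hinv : (1 / √n) ^ 2 = 1 / (n : ℝ) := by
    rw [div_pow, one_pow, sq_sqrt (by positivity)]
  calc (2 : ℝ) ^ (2 * n) * (1 / √n) ^ 2 ^ (Nat.log 2 n + 3)
      = 2 ^ (2 * n) * (1 / (n : ℝ)) ^ 2 ^ (Nat.log 2 n + 2) := by
        rw [pow_succ 2 (Nat.log 2 n + 2), mul_comm _ 2, pow_mul (1 / √(n : ℝ)), hinv]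
    _ ≤ 2 ^ (2 * n) * (1 / (n : ℝ)) ^ (2 * n) := by
        have h1 : 1 / (n : ℝ) ≤ 1 := (div_le_one (by positivity)).mpr (by linarith)
        exact mul_le_mul_of_nonneg_left (pow_le_pow_of_le_one (by positivity) h1 hlog)
          (by positivity)
    _ = (2 / n) ^ (2 * n) := by rw [← mul_pow, mul_one_div]
    _ ≤ 1 := pow_le_one₀ (by positivity) ((div_le_one (by positivity)).mpr hn')
    _ < √n := by rw [lt_sqrt zero_le_one]; linarith

lemma quarter_add_inv_sqrt_pow_le {n : ℝ} (hn : 2 ≤ n) {t : ℕ} (ht : 240 * log n ≤ t) :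
    (1 / 4 + 1 / √n) ^ t ≤ (n ^ 10)⁻¹ := by
  have hsqrt : 24 / 17 ≤ √n := by
    rw [le_sqrt (by norm_num) (by linarith)]
    linarith
  have hq : 1 / 4 + 1 / √n ≤ exp (-(1 / 24)) := by
    have := add_one_le_exp (-(1 / 24))
    have : 1 / √n ≤ 17 / 24 := by
      rw [div_le_div_iff₀ (by positivity) (by norm_num)]
      linarith
    linarith
  calc (1 / 4 + 1 / √n) ^ t ≤ exp (-(1 / 24)) ^ t := by gcongr
    _ = exp (-(t / 24)) := by rw [← exp_nat_mul]; ring_nf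
    _ ≤ exp (-(10 * log n)) := by gcongr; linarith
    _ = (n ^ 10)⁻¹ := by
        rw [exp_neg, show 10 * log n = log (n ^ 10) by rw [log_pow]; norm_num,
          exp_log (by positivity)]

lemma four_pow_mul_quarter_add_inv_sqrt_pow_le {n t : ℕ} (hn : 2 ≤ n) (ht : 240 * log n ≤ t) :
    (4 : ℝ) ^ (Nat.log 2 n + 3) * (1 / 4 + 1 / √n) ^ t ≤ 1 / (n : ℝ) ^ 2 := by
  have hn' : (2 : ℝ) ≤ n := by exact_mod_cast hn
  calc (4 : ℝ) ^ (Nat.log 2 n + 3) * (1 / 4 + 1 / √n) ^ t ≤ 64 * (n : ℝ) ^ 2 * ((n : ℝ) ^ 10)⁻¹ := by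
        gcongr
        · exact four_pow_log_add_three_le (by omega)
        · exact quarter_add_inv_sqrt_pow_le hn' ht
    _ ≤ 1 / (n : ℝ) ^ 2 := by
        rw [← div_eq_mul_inv, div_le_div_iff₀ (by positivity) (by positivity)]
        have : (64 : ℝ) ≤ n ^ 6 := by nlinarith [pow_le_pow_left₀ (by norm_num) hn' 6]
        nlinarith [pow_pos (by positivity : (0 : ℝ) < n) 4]

/-- There is an absolute constant `k` such that: for every finite abelian
group `G` of size `2^{2n}` (`n ≥ 2`) and every `C₀ ⊆ G` leaving at most
`2^{2n}/n` points uncovered, if `t ≥ k log n` and `u₁, ..., u_t` are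
independent uniform elements of `G`, then with probability all but `1/n²`
the `t`-fold translate process covers all of `G`. -/
theorem stmt_15 :
    ∃ k : ℝ, 0 < k ∧
      ∀ (n : ℕ), 2 ≤ n →
        ∀ (G : Type) [AddCommGroup G] [Fintype G] [DecidableEq G],
          Fintype.card G = 2 ^ (2 * n) →
            ∀ C₀ : Finset G,
              ((Finset.univ \ C₀).card : ℝ) ≤ (2 ^ (2 * n) : ℝ) / (n : ℝ) →
                ∀ t : ℕ, k * Real.log n ≤ (t : ℝ) →
                  ((Finset.univ.filter (fun u : Fin t → G =>
                      iterCover C₀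
                        (fun i => if h : i - 1 < t then u ⟨i - 1, h⟩ else 0) t ≠
                        Finset.univ)).card : ℝ) /
                      (Fintype.card (Fin t → G) : ℝ) ≤
                    1 / (n : ℝ) ^ 2 := by
  refine ⟨240, by norm_num, fun n hn G _ _ _ hcard C₀ hC₀ t ht => ?_⟩
  have hn' : (2 : ℝ) ≤ n := by exact_mod_cast hn
  have hG : (Fintype.card G : ℝ) = 2 ^ (2 * n) := by exact_mod_cast hcard
  have hsqrt : 1 ≤ √(n : ℝ) := by rw [one_le_sqrt]; linarith
  have hinit : √(n : ℝ) * #(univ \ C₀) ≤ Fintype.card G * (1 / √n) := by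
    calc √(n : ℝ) * #(univ \ C₀) ≤ √n * (2 ^ (2 * n) / n) := by gcongr
      _ = Fintype.card G * (1 / √n) := by
        rw [hG]
        field_simp
        rw [sq_sqrt (by positivity)]
  have hcount := card_iterCover_ne_univ_le (a := 1 / 4) (by positivity) (by positivity)
    (div_le_one_of_le₀ hsqrt (by positivity)) (by norm_num) (by norm_num) hinit
    (by rw [hG]; exact pow_two_pow_log_add_three_lt hn) t
  rw [Fintype.card_fun, Fintype.card_fin, Nat.cast_pow]
  calc _ ≤ ((1 / 4 + 1 / √n) * Fintype.card G) ^ t / (1 / 4) ^ (Nat.log 2 n + 3) /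
        (Fintype.card G : ℝ) ^ t := by gcongr
    _ = 4 ^ (Nat.log 2 n + 3) * (1 / 4 + 1 / √n) ^ t := by
        rw [mul_pow, one_div_pow, div_div_eq_mul_div, div_one]
        field_simp
    _ ≤ 1 / (n : ℝ) ^ 2 := four_pow_mul_quarter_add_inv_sqrt_pow_le hn ht
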